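/- arXiv:2206.06517 — 3 statements merged into one kernel-verified Lean document; each statement's English description precedes it below -/
import Mathlib

section
/- Let Q > 1 be a real number and let g(q,x) be a real-valued function defined for integers 1 ≤ q ≤ Q and real x ≠ 0. Suppose that for every real A ≥ 1 there is a constant C_A such that for all such q and all x ≠ 0 one has |g(q,x) − 1| ≤ C_A (Q/q)((q/Q) + |x|)^A and |g(q,x)| ≤ C_A |x|^{−A}. Then for every ε > 0 there is a constant C, depending only on ε and on the constants C_A, such that |g(q,x)| ≤ C·Q^ε for all integers 1 ≤ q ≤ Q and all real x ≠ 0. -/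
/-- Uniform bound `g(q,x) ≪_ε Q^ε` for the weight function in the
Duke–Friedlander–Iwaniec delta method, deduced from its two basic properties.
The constant `C` depends only on `ε` and on the constants `Cc A`. -/
theorem dfi_g_uniform_bound (g : ℝ → ℕ → ℝ → ℝ) (Cc : ℝ → ℝ)
    (h : ∀ A : ℝ, 1 ≤ A → ∀ Q : ℝ, 1 < Q → ∀ q : ℕ, 1 ≤ q → (q : ℝ) ≤ Q →
        ∀ x : ℝ, x ≠ 0 →
          |g Q q x - 1| ≤ Cc A * (Q / (q : ℝ)) * ((q : ℝ) / Q + |x|) ^ A ∧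
          |g Q q x| ≤ Cc A * |x| ^ (-A)) :
    ∀ ε : ℝ, 0 < ε → ∃ C : ℝ, ∀ Q : ℝ, 1 < Q → ∀ q : ℕ, 1 ≤ q → (q : ℝ) ≤ Q →
        ∀ x : ℝ, x ≠ 0 → |g Q q x| ≤ C * Q ^ ε := by
  intro ε hε
  set A : ℝ := max 1 (1/ε) with hA_def
  have hA1 : (1:ℝ) ≤ A := le_max_left _ _
  have hA0 : (0:ℝ) < A := lt_of_lt_of_le one_pos hA1
  have hinvA : 1/A ≤ ε := by
    rw [div_le_iff₀ hA0]
    calc (1:ℝ) = ε * (1/ε) := by field_simp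
      _ ≤ ε * A := by gcongr; exact le_max_right _ _
  have hCc : ∀ B : ℝ, 1 ≤ B → 0 ≤ Cc B := by
    intro B hB
    have h2 := (h B hB 2 (by norm_num) 1 le_rfl (by norm_num) 1 one_ne_zero).2
    have : |(1:ℝ)| ^ (-B) = 1 := by norm_num
    rw [this, mul_one] at h2
    exact le_trans (abs_nonneg _) h2
  have h2A : (0:ℝ) ≤ (2:ℝ) ^ A := Real.rpow_nonneg (by norm_num) _
  refine ⟨Cc 1 + (1 + Cc A * 2 ^ A), ?_⟩
  intro Q hQ q hq hqQ x hx
  have hQ0 : (0:ℝ) < Q := lt_trans one_pos hQ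
  have hq0 : (0:ℝ) < (q:ℝ) := by exact_mod_cast hq
  have hQe : (1:ℝ) ≤ Q ^ ε := Real.one_le_rpow hQ.le hε.le
  have hx0 : (0:ℝ) < |x| := abs_pos.mpr hx
  by_cases hcase : Q ^ (-(1/A)) ≤ |x|
  · -- large x : use decay with exponent 1
    have h1 := (h 1 le_rfl Q hQ q hq hqQ x hx).2
    have hxe : |x| ^ (-(1:ℝ)) ≤ Q ^ ε := by
      rw [Real.rpow_neg_one]
      have hT0 : (0:ℝ) < Q ^ (-(1/A)) := Real.rpow_pos_of_pos hQ0 _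
      calc |x|⁻¹ ≤ (Q ^ (-(1/A)))⁻¹ := by
            exact inv_anti₀ hT0 hcase
        _ = Q ^ (1/A) := by rw [← Real.rpow_neg hQ0.le, neg_neg]
        _ ≤ Q ^ ε := Real.rpow_le_rpow_of_exponent_le hQ.le hinvA
    calc |g Q q x| ≤ Cc 1 * |x| ^ (-(1:ℝ)) := h1
      _ ≤ Cc 1 * Q ^ ε := by
          exact mul_le_mul_of_nonneg_left hxe (hCc 1 le_rfl)
      _ ≤ (Cc 1 + (1 + Cc A * 2 ^ A)) * Q ^ ε := by
          have h1' := hCc 1 le_rfl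
          have hA' := hCc A hA1
          nlinarith [mul_nonneg (show (0:ℝ) ≤ 1 + Cc A * 2 ^ A by nlinarith)
            (le_trans zero_le_one hQe)]
  · push_neg at hcase
    have hb := (h A hA1 Q hQ q hq hqQ x hx).1
    have key : Q / q * ((q:ℝ) / Q + |x|) ^ A ≤ 2 ^ A := by
      rcases le_total (|x|) ((q:ℝ)/Q) with hc | hc
      · have hsum : (q:ℝ)/Q + |x| ≤ 2 * ((q:ℝ)/Q) := by linarith
        have hqQ1 : (q:ℝ)/Q ≤ 1 := by
          rw [div_le_one hQ0]; exact hqQ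
        have hqQpos : (0:ℝ) < (q:ℝ)/Q := by positivity
        calc Q / q * ((q:ℝ) / Q + |x|) ^ A
            ≤ Q / q * (2 * ((q:ℝ)/Q)) ^ A := by
              exact mul_le_mul_of_nonneg_left
                (Real.rpow_le_rpow (by positivity) hsum hA0.le) (by positivity)
          _ = Q / q * (2 ^ A * ((q:ℝ)/Q) ^ A) := by
              rw [Real.mul_rpow (by norm_num) hqQpos.le]
          _ ≤ Q / q * (2 ^ A * ((q:ℝ)/Q) ^ (1:ℝ)) := by
              have := Real.rpow_le_rpow_of_exponent_ge hqQpos hqQ1 hA1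
              exact mul_le_mul_of_nonneg_left
                (mul_le_mul_of_nonneg_left this h2A) (by positivity)
          _ = 2 ^ A := by
              rw [Real.rpow_one]; field_simp
      · have hsum : (q:ℝ)/Q + |x| ≤ 2 * |x| := by linarith
        have hxA : |x| ^ A ≤ Q⁻¹ := by
          have hle : |x| ≤ Q ^ (-(1/A)) := hcase.le
          calc |x| ^ A ≤ (Q ^ (-(1/A))) ^ A :=
                Real.rpow_le_rpow hx0.le hle hA0.le
            _ = Q ^ ((-(1/A)) * A) := by
                rw [← Real.rpow_mul hQ0.le]
            _ = Q⁻¹ := by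
                rw [show (-(1/A)) * A = -1 by field_simp, Real.rpow_neg_one]
        have hq1 : (1:ℝ) ≤ (q:ℝ) := by exact_mod_cast hq
        calc Q / q * ((q:ℝ) / Q + |x|) ^ A
            ≤ Q / q * (2 * |x|) ^ A := by
              exact mul_le_mul_of_nonneg_left
                (Real.rpow_le_rpow (by positivity) hsum hA0.le) (by positivity)
          _ = Q / q * (2 ^ A * |x| ^ A) := by
              rw [Real.mul_rpow (by norm_num) hx0.le]
          _ ≤ Q / q * (2 ^ A * Q⁻¹) := by
              exact mul_le_mul_of_nonneg_left
                (mul_le_mul_of_nonneg_left hxA h2A) (by positivity)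
          _ = 2 ^ A * (1 / q) := by field_simp
          _ ≤ 2 ^ A * 1 := by
              exact mul_le_mul_of_nonneg_left (by
                rw [div_le_one hq0]; exact hq1) h2A
          _ = 2 ^ A := mul_one _
    have hgb : |g Q q x| ≤ 1 + Cc A * 2 ^ A := by
      have habs : |g Q q x| ≤ |g Q q x - 1| + 1 := by
        have := abs_add_le (g Q q x - 1) 1
        simpa using this
      have hA' := hCc A hA1
      have : Cc A * (Q / (q:ℝ)) * (((q:ℝ)) / Q + |x|) ^ A ≤ Cc A * 2 ^ A := by
        calc Cc A * (Q / (q:ℝ)) * (((q:ℝ)) / Q + |x|) ^ A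
            = Cc A * (Q / (q:ℝ) * (((q:ℝ)) / Q + |x|) ^ A) := by ring
          _ ≤ Cc A * 2 ^ A := mul_le_mul_of_nonneg_left key hA'
      linarith
    calc |g Q q x| ≤ 1 + Cc A * 2 ^ A := hgb
      _ ≤ (Cc 1 + (1 + Cc A * 2 ^ A)) * Q ^ ε := by
          have h1' := hCc 1 le_rfl
          have hA' := hCc A hA1
          nlinarith [mul_nonneg h1' (le_trans zero_le_one hQe),
            mul_le_mul_of_nonneg_left hQe
              (show (0:ℝ) ≤ 1 + Cc A * 2 ^ A by nlinarith)]
end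

section
/- Let η ∈ {+1, −1}, let q₁, q₂ be positive integers, and let h₁, h₂ be integers with gcd(h₁, q₁) = 1 and gcd(h₂, q₂) = 1. Then Σ_{γ mod q₁q₂} S(h̄₁, ηγ; q₁) · S(h̄₂, ηγ; q₂) = 0 if q₁ ≠ q₂, and if q₁ = q₂ = q it equals q² · Σ_{q' | q, h₁ ≡ h₂ (mod q')} q' · μ(q/q'), where μ is the Möbius function, h̄₁ denotes the inverse of h₁ modulo q₁ and h̄₂ the inverse of h₂ modulo q₂, and the outer sum runs over a complete residue system γ modulo q₁q₂. -/
/-!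
Write both Kloosterman sums over the units `u₁, u₂` of `ℤ/q₁ℤ` and `ℤ/q₂ℤ`. The sum over
`γ mod q₁q₂` is then an orthogonality relation: it detects `q₁q₂ ∣ q₂ū₁ + q₁ū₂`, which forces
`q₁ ∣ q₂` and `q₂ ∣ q₁` because `ūᵢ` is prime to `qᵢ`. When `q₁ = q₂ = q` the condition says
`u₂ = -u₁`, and what is left is `q²` times the Ramanujan sum `c_q(h̄₁ - h̄₂)`; Möbius inversion of
the coprimality condition evaluates it, and `q' ∣ h̄₁ - h̄₂` iff `h₁ ≡ h₂ (mod q')`.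
-/

/-- `e x = e^{2πix}`. -/
noncomputable def e (x : ℝ) : ℂ := Complex.exp (2 * (Real.pi : ℂ) * Complex.I * (x : ℂ))

/-- The Kloosterman sum `S(a, b; c) = Σ*_{d mod c} e((ad + b·d̄)/c)`. -/
noncomputable def kloos (a b : ℤ) (c : ℕ) : ℂ :=
  ∑ d ∈ (Finset.range c).filter (fun d => Nat.Coprime d c),
    e (((a * (d : ℤ) + b * (((d : ZMod c)⁻¹).val : ℤ) : ℤ) : ℝ) / (c : ℝ))

open Finset ArithmeticFunction

noncomputable def eMod (n : ℕ) (t : ℤ) : ℂ := e ((t : ℝ) / n)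

section eMod

variable {n : ℕ}

lemma e_add (x y : ℝ) : e (x + y) = e x * e y := by
  simp only [e, ← Complex.exp_add, Complex.ofReal_add, mul_add]

lemma eMod_add (s t : ℤ) : eMod n (s + t) = eMod n s * eMod n t := by
  simp only [eMod, Int.cast_add, add_div, e_add]

lemma eMod_mul_natCast (t : ℤ) (k : ℕ) : eMod n (t * k) = eMod n t ^ k := by
  simp only [eMod, e, ← Complex.exp_nat_mul]
  push_cast
  ring_nf

lemma eMod_mul_mul_right {m : ℕ} (hm : m ≠ 0) (t : ℤ) : eMod (n * m) (t * m) = eMod n t := by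
  rw [eMod, eMod, Int.cast_mul, Nat.cast_mul, Int.cast_natCast,
    mul_div_mul_right _ _ (Nat.cast_ne_zero.mpr hm)]

variable [NeZero n]

lemma eMod_eq_stdAddChar (t : ℤ) : eMod n t = ZMod.stdAddChar (t : ZMod n) := by
  rw [ZMod.stdAddChar_coe, eMod, e]
  push_cast
  ring_nf

lemma eMod_congr {s t : ℤ} (h : (s : ZMod n) = t) : eMod n s = eMod n t := by
  rw [eMod_eq_stdAddChar, eMod_eq_stdAddChar, h]

lemma eMod_eq_one_iff (t : ℤ) : eMod n t = 1 ↔ (n : ℤ) ∣ t := by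
  rw [eMod_eq_stdAddChar, ← AddChar.map_zero_eq_one (ZMod.stdAddChar (N := n)),
    ZMod.injective_stdAddChar.eq_iff, ZMod.intCast_zmod_eq_zero_iff_dvd]

lemma sum_range_eMod_mul (t : ℤ) :
    ∑ γ ∈ range n, eMod n (t * γ) = if (n : ℤ) ∣ t then (n : ℂ) else 0 := by
  simp_rw [eMod_mul_natCast]
  split_ifs with h
  · simp [(eMod_eq_one_iff t).mpr h]
  · have hpow : eMod n t ^ n = 1 := by
      rw [← eMod_mul_natCast, eMod_eq_one_iff]
      exact dvd_mul_left _ _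
    rw [geom_sum_eq (mt (eMod_eq_one_iff t).mp h), hpow, sub_self, zero_div]

end eMod

lemma sum_filter_coprime_range_eq_sum_units {M : Type*} [AddCommMonoid M] (c : ℕ) [NeZero c]
    (f : ℕ → M) :
    ∑ d ∈ (range c).filter (fun d => Nat.Coprime d c), f d =
      ∑ u : (ZMod c)ˣ, f (u : ZMod c).val := by
  refine sum_bij' (fun d hd => ZMod.unitOfCoprime d (mem_filter.mp hd).2)
    (fun u _ => (u : ZMod c).val) (fun _ _ => mem_univ _) (fun u _ => ?_) (fun d hd => ?_)
    (fun u _ => Units.ext (ZMod.natCast_zmod_val _)) (fun d hd => ?_)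
  · exact mem_filter.mpr ⟨mem_range.mpr (ZMod.val_lt _), ZMod.val_coe_unit_coprime u⟩
  · exact ZMod.val_cast_of_lt (mem_range.mp (mem_filter.mp hd).1)
  · rw [ZMod.coe_unitOfCoprime, ZMod.val_cast_of_lt (mem_range.mp (mem_filter.mp hd).1)]

lemma kloos_eq_sum_units (a b : ℤ) (c : ℕ) [NeZero c] :
    kloos a b c = ∑ u : (ZMod c)ˣ,
      eMod c (a * (u : ZMod c).val + b * ((u⁻¹ : (ZMod c)ˣ) : ZMod c).val) := by
  rw [kloos, sum_filter_coprime_range_eq_sum_units]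
  simp only [ZMod.natCast_zmod_val, ZMod.inv_coe_unit, eMod]

noncomputable def ramanujanSum (q : ℕ) (t : ℤ) : ℂ :=
  ∑ d ∈ (range q).filter (fun d => Nat.Coprime d q), eMod q (t * d)

lemma sum_moebius_divisors (n : ℕ) :
    ∑ d ∈ n.divisors, moebius d = if n = 1 then 1 else 0 := by
  rw [← coe_mul_zeta_apply, moebius_mul_coe_zeta, one_apply]

lemma ite_coprime_eq_sum_moebius {q : ℕ} (hq : q ≠ 0) (d : ℕ) :
    (if d.Coprime q then 1 else 0 : ℤ) = ∑ e ∈ q.divisors.filter (· ∣ d), moebius e := by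
  have hfilter : q.divisors.filter (· ∣ d) = q.divisors.filter (· ∣ d.gcd q) :=
    filter_congr fun e he => by rw [Nat.dvd_gcd_iff, and_iff_left (Nat.dvd_of_mem_divisors he)]
  rw [hfilter, Nat.divisors_filter_dvd_of_dvd hq (Nat.gcd_dvd_right d q), sum_moebius_divisors]

lemma sum_filter_dvd_range {M : Type*} [AddCommMonoid M] {q e : ℕ} (he : e ∣ q) (he0 : 0 < e)
    (f : ℕ → M) :
    ∑ d ∈ (range q).filter (e ∣ ·), f d = ∑ m ∈ range (q / e), f (e * m) := by
  have hcancel {d : ℕ} (hd : d ∈ (range q).filter (e ∣ ·)) : e * (d / e) = d :=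
    Nat.mul_div_cancel' (mem_filter.mp hd).2
  refine sum_nbij' (· / e) (e * ·) (fun d hd => ?_) (fun m hm => ?_) (fun d hd => hcancel hd)
    (fun m _ => Nat.mul_div_cancel_left m he0) (fun d hd => by rw [hcancel hd])
  · exact mem_range.mpr (Nat.div_lt_div_of_lt_of_dvd he (mem_range.mp (mem_filter.mp hd).1))
  · refine mem_filter.mpr ⟨mem_range.mpr ?_, dvd_mul_right e m⟩
    calc e * m < e * (q / e) := Nat.mul_lt_mul_of_pos_left (mem_range.mp hm) he0
      _ = q := Nat.mul_div_cancel' he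

lemma sum_filter_dvd_range_eMod_mul {q e : ℕ} (he : e ∈ q.divisors) (t : ℤ) :
    ∑ d ∈ (range q).filter (e ∣ ·), eMod q (t * d) =
      if ((q / e : ℕ) : ℤ) ∣ t then ((q / e : ℕ) : ℂ) else 0 := by
  have he0 : 0 < e := Nat.pos_of_mem_divisors he
  have : NeZero (q / e) := ⟨(Nat.div_pos (Nat.divisor_le he) he0).ne'⟩
  rw [sum_filter_dvd_range (Nat.dvd_of_mem_divisors he) he0, ← sum_range_eMod_mul]
  refine sum_congr rfl fun m _ => ?_
  rw [← eMod_mul_mul_right he0.ne' (t * m), Nat.div_mul_cancel (Nat.dvd_of_mem_divisors he)]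
  push_cast
  ring_nf

theorem ramanujanSum_eq_sum_moebius {q : ℕ} (hq : q ≠ 0) (t : ℤ) :
    ramanujanSum q t = ∑ q' ∈ q.divisors.filter (fun q' : ℕ => (q' : ℤ) ∣ t),
      (q' : ℂ) * ((moebius (q / q') : ℤ) : ℂ) := by
  calc ramanujanSum q t
      = ∑ d ∈ range q, ∑ e ∈ q.divisors,
          if e ∣ d then (moebius e : ℂ) * eMod q (t * d) else 0 := by
        rw [ramanujanSum, sum_filter]
        refine sum_congr rfl fun d _ => ?_
        rw [← sum_filter, ← sum_mul, ← Int.cast_sum, ← ite_coprime_eq_sum_moebius hq]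
        split_ifs <;> simp
    _ = ∑ e ∈ q.divisors,
          (moebius e : ℂ) * if ((q / e : ℕ) : ℤ) ∣ t then ((q / e : ℕ) : ℂ) else 0 := by
        rw [sum_comm]
        refine sum_congr rfl fun e he => ?_
        rw [← sum_filter_dvd_range_eMod_mul he, mul_sum, sum_filter]
    _ = _ := by
        rw [sum_filter, ← Nat.sum_div_divisors]
        refine sum_congr rfl fun e he => ?_
        rw [Nat.div_div_self (Nat.dvd_of_mem_divisors he) hq]
        split_ifs <;> simp [mul_comm]

lemma eq_of_mul_dvd_mul_add_mul {q₁ q₂ r₁ r₂ : ℕ} (h₁ : r₁.Coprime q₁) (h₂ : r₂.Coprime q₂)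
    (h : q₁ * q₂ ∣ q₂ * r₁ + q₁ * r₂) : q₁ = q₂ := by
  have hq₁ : q₁ ∣ q₂ * r₁ :=
    (Nat.dvd_add_left (dvd_mul_right q₁ r₂)).mp ((dvd_mul_right q₁ q₂).trans h)
  have hq₂ : q₂ ∣ q₁ * r₂ :=
    (Nat.dvd_add_right (dvd_mul_right q₂ r₁)).mp ((dvd_mul_left q₂ q₁).trans h)
  exact Nat.dvd_antisymm (h₁.symm.dvd_of_dvd_mul_right hq₁) (h₂.symm.dvd_of_dvd_mul_right hq₂)

namespace ZMod

lemma dvd_val_add_val_iff {q : ℕ} [NeZero q] (x y : ZMod q) :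
    q ∣ x.val + y.val ↔ y = -x := by
  rw [← natCast_eq_zero_iff, Nat.cast_add, natCast_zmod_val, natCast_zmod_val,
    add_eq_zero_iff_eq_neg']

lemma inv_eq_inv_iff {n : ℕ} {x y : ZMod n} (hx : IsUnit x) (hy : IsUnit y) :
    x⁻¹ = y⁻¹ ↔ x = y := by
  obtain ⟨u, rfl⟩ := hx
  obtain ⟨v, rfl⟩ := hy
  rw [inv_coe_unit, inv_coe_unit, Units.val_inj, Units.val_inj, inv_inj]

lemma intCast_val_inv_of_dvd {q q' : ℕ} [NeZero q] (hq' : q' ∣ q) {h : ℤ}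
    (hh : IsUnit (h : ZMod q)) : ((((h : ZMod q)⁻¹).val : ℤ) : ZMod q') = (h : ZMod q')⁻¹ := by
  have hmul := congr_arg (castHom hq' (ZMod q')) (mul_inv_of_unit _ hh)
  rw [map_mul, map_one, map_intCast, castHom_apply] at hmul
  rw [Int.cast_natCast, natCast_val, ZMod.inv_eq_of_mul_eq_one _ _ _ hmul]

end ZMod

lemma dvd_val_inv_sub_val_inv_iff {q q' : ℕ} [NeZero q] (hq' : q' ∣ q) {h₁ h₂ : ℤ}
    (hc₁ : Int.gcd h₁ q = 1) (hc₂ : Int.gcd h₂ q = 1) :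
    (q' : ℤ) ∣ (((h₁ : ZMod q)⁻¹).val : ℤ) - (((h₂ : ZMod q)⁻¹).val : ℤ) ↔
      h₁ % q' = h₂ % q' := by
  have hunit {h : ℤ} (hc : Int.gcd h q = 1) : IsUnit (h : ZMod q) :=
    (ZMod.coe_int_isUnit_iff_isCoprime h q).mpr
      (Int.isCoprime_iff_gcd_eq_one.mpr (by rwa [Int.gcd_comm]))
  have hunit' {h : ℤ} (hc : Int.gcd h q = 1) : IsUnit (h : ZMod q') := by
    simpa using (hunit hc).map (ZMod.castHom hq' (ZMod q'))
  rw [← ZMod.intCast_eq_intCast_iff_dvd_sub, ZMod.intCast_val_inv_of_dvd hq' (hunit hc₁),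
    ZMod.intCast_val_inv_of_dvd hq' (hunit hc₂), ZMod.inv_eq_inv_iff (hunit' hc₂) (hunit' hc₁),
    eq_comm, ZMod.intCast_eq_intCast_iff']

section correlation

variable {η : ℤ}

lemma sum_kloos_mul_kloos (hη : IsUnit η) (q₁ q₂ : ℕ) [NeZero q₁] [NeZero q₂] (a₁ a₂ : ℤ) :
    ∑ γ ∈ range (q₁ * q₂), kloos a₁ (η * γ) q₁ * kloos a₂ (η * γ) q₂ =
      ((q₁ * q₂ : ℕ) : ℂ) * ∑ u₁ : (ZMod q₁)ˣ, ∑ u₂ : (ZMod q₂)ˣ,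
        if q₁ * q₂ ∣
            q₂ * ((u₁⁻¹ : (ZMod q₁)ˣ) : ZMod q₁).val + q₁ * ((u₂⁻¹ : (ZMod q₂)ˣ) : ZMod q₂).val
        then eMod (q₁ * q₂) (q₂ * (a₁ * (u₁ : ZMod q₁).val) + q₁ * (a₂ * (u₂ : ZMod q₂).val))
        else 0 := by
  have hsplit (γ : ℕ) (u₁ : (ZMod q₁)ˣ) (u₂ : (ZMod q₂)ˣ) :
      eMod q₁ (a₁ * (u₁ : ZMod q₁).val + η * γ * ((u₁⁻¹ : (ZMod q₁)ˣ) : ZMod q₁).val) *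
        eMod q₂ (a₂ * (u₂ : ZMod q₂).val + η * γ * ((u₂⁻¹ : (ZMod q₂)ˣ) : ZMod q₂).val) =
      eMod (q₁ * q₂) (q₂ * (a₁ * (u₁ : ZMod q₁).val) + q₁ * (a₂ * (u₂ : ZMod q₂).val)) *
        eMod (q₁ * q₂) (η * (q₂ * ((u₁⁻¹ : (ZMod q₁)ˣ) : ZMod q₁).val
          + q₁ * ((u₂⁻¹ : (ZMod q₂)ˣ) : ZMod q₂).val : ℕ) * γ) := by
    rw [← eMod_mul_mul_right (n := q₁) (NeZero.ne q₂),
      ← eMod_mul_mul_right (n := q₂) (NeZero.ne q₁), mul_comm q₂ q₁, ← eMod_add, ← eMod_add]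
    congr 1
    push_cast
    ring
  simp_rw [kloos_eq_sum_units, sum_mul_sum, hsplit]
  rw [sum_comm]
  simp_rw [mul_sum]
  refine sum_congr rfl fun u₁ _ => ?_
  rw [sum_comm]
  refine sum_congr rfl fun u₂ _ => ?_
  rw [← mul_sum, sum_range_eMod_mul]
  simp only [hη.dvd_mul_left, Int.natCast_dvd_natCast]
  split_ifs <;> simp [mul_comm]

lemma sum_kloos_mul_kloos_of_ne (hη : IsUnit η) {q₁ q₂ : ℕ} [NeZero q₁] [NeZero q₂]
    (hne : q₁ ≠ q₂) (a₁ a₂ : ℤ) :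
    ∑ γ ∈ range (q₁ * q₂), kloos a₁ (η * γ) q₁ * kloos a₂ (η * γ) q₂ = 0 := by
  rw [sum_kloos_mul_kloos hη, sum_eq_zero, mul_zero]
  refine fun u₁ _ => sum_eq_zero fun u₂ _ => if_neg fun h => hne ?_
  exact eq_of_mul_dvd_mul_add_mul (ZMod.val_coe_unit_coprime _) (ZMod.val_coe_unit_coprime _) h

lemma sum_kloos_mul_kloos_self (hη : IsUnit η) (q : ℕ) [NeZero q] (a₁ a₂ : ℤ) :
    ∑ γ ∈ range (q * q), kloos a₁ (η * γ) q * kloos a₂ (η * γ) q =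
      (q : ℂ) ^ 2 * ramanujanSum q (a₁ - a₂) := by
  have hcond (u₁ u₂ : (ZMod q)ˣ) :
      q * q ∣ q * ((u₁⁻¹ : (ZMod q)ˣ) : ZMod q).val + q * ((u₂⁻¹ : (ZMod q)ˣ) : ZMod q).val ↔
        u₂ = -u₁ := by
    rw [← mul_add, Nat.mul_dvd_mul_iff_left (Nat.pos_of_neZero q), ZMod.dvd_val_add_val_iff,
      ← Units.val_neg, Units.val_inj, neg_inv, inv_inj]
  have hphase (u : (ZMod q)ˣ) :
      eMod (q * q) (q * (a₁ * (u : ZMod q).val) + q * (a₂ * ((-u : (ZMod q)ˣ) : ZMod q).val)) =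
        eMod q ((a₁ - a₂) * (u : ZMod q).val) := by
    have hmod : ((a₁ * (u : ZMod q).val + a₂ * ((-u : (ZMod q)ˣ) : ZMod q).val : ℤ) : ZMod q) =
        ((a₁ - a₂) * (u : ZMod q).val : ℤ) := by
      push_cast
      rw [ZMod.natCast_zmod_val, ZMod.natCast_zmod_val]
      ring
    rw [← eMod_congr hmod, ← eMod_mul_mul_right (n := q) (NeZero.ne q)]
    ring_nf
  rw [sum_kloos_mul_kloos hη]
  simp_rw [hcond, sum_ite_eq', mem_univ, if_true, hphase]
  rw [ramanujanSum, sum_filter_coprime_range_eq_sum_units]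
  push_cast
  ring

end correlation

/-- Diagonal (zero-frequency) correlation sum of two Kloosterman sums:
it vanishes unless `q₁ = q₂`, in which case it is a Ramanujan-type sum. -/
theorem kloosterman_correlation_zero_freq (η : ℤ) (hη : η = 1 ∨ η = -1)
    (q₁ q₂ : ℕ) (hq₁ : 0 < q₁) (hq₂ : 0 < q₂)
    (h₁ h₂ : ℤ) (hc₁ : Int.gcd h₁ q₁ = 1) (hc₂ : Int.gcd h₂ q₂ = 1) :
    (q₁ ≠ q₂ →
      ∑ γ ∈ Finset.range (q₁ * q₂),
        kloos ((((h₁ : ZMod q₁)⁻¹).val : ℤ)) (η * (γ : ℤ)) q₁ *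
          kloos ((((h₂ : ZMod q₂)⁻¹).val : ℤ)) (η * (γ : ℤ)) q₂ = 0) ∧
    (q₁ = q₂ →
      ∑ γ ∈ Finset.range (q₁ * q₂),
        kloos ((((h₁ : ZMod q₁)⁻¹).val : ℤ)) (η * (γ : ℤ)) q₁ *
          kloos ((((h₂ : ZMod q₂)⁻¹).val : ℤ)) (η * (γ : ℤ)) q₂ =
      (q₁ : ℂ) ^ 2 *
        ∑ q' ∈ q₁.divisors.filter (fun q' : ℕ => h₁ % (q' : ℤ) = h₂ % (q' : ℤ)),
          (q' : ℂ) * ((ArithmeticFunction.moebius (q₁ / q') : ℤ) : ℂ)) := by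
  have hηu : IsUnit η := Int.isUnit_iff.mpr hη
  have : NeZero q₁ := ⟨hq₁.ne'⟩
  have : NeZero q₂ := ⟨hq₂.ne'⟩
  refine ⟨fun hne => sum_kloos_mul_kloos_of_ne hηu hne _ _, fun heq => ?_⟩
  subst heq
  rw [sum_kloos_mul_kloos_self hηu, ramanujanSum_eq_sum_moebius hq₁.ne']
  congr 2
  exact filter_congr fun q' hq' =>
    dvd_val_inv_sub_val_inv_iff (Nat.dvd_of_mem_divisors hq') hc₁ hc₂
end

section
/- Let q₁, q₂ be positive integers, let q₀ = gcd(q₁, q₂), and write q₁ = q₀·q₁₀·q₁′ and q₂ = q₀·q₂₀·q₂′, where q₁₀, q₂₀ are the unique positive integers all of whose prime factors divide q₀ and gcd(q₁′, q₀) = gcd(q₂′, q₀) = 1 (so that these factorizations are uniquely determined). Let η ∈ {+1, −1}, let m be an integer, and let α₁, α₂ be integers with gcd(α₁, q₁) = 1 and gcd(α₂, q₂) = 1. Then the congruence −ηm ≡ α₁q₂ + α₂q₁ (mod q₁q₂) holds if and only if all of the following hold: q₀ | m; −η(m/q₀) ≡ α₁q₂₀q₂′ + α₂q₁₀q₁′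 (mod q₀q₁₀q₂₀); α₁ ≡ −η(m/q₀)·(q₂₀q₂′)⁻¹ (mod q₁′); and α₂ ≡ −η(m/q₀)·(q₁₀q₁′)⁻¹ (mod q₂′), where (q₂₀q₂′)⁻¹ denotes the multiplicative inverse of q₂₀q₂′ modulo q₁′ and (q₁₀q₁′)⁻¹ the multiplicative inverse of q₁₀q₁′ modulo q₂′. -/
lemma nat_coprime_of (a b : ℕ) (h : ∀ p : ℕ, p.Prime → p ∣ a → p ∣ b → False) :
    Nat.Coprime a b := by
  by_contra hg
  obtain ⟨p, hp, hpd⟩ := Nat.exists_prime_and_dvd hg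
  exact h p hp (hpd.trans (Nat.gcd_dvd_left _ _)) (hpd.trans (Nat.gcd_dvd_right _ _))

lemma side_iff (n : ℕ) (hn : 0 < n) (q₀ d : ℕ) (h₀ : Nat.Coprime q₀ n) (hd : Nat.Coprime d n)
    (η k β z : ℤ) (hz : (n : ℤ) ∣ z) :
    (-η * ((q₀ : ℤ) * k) ≡ β * ((q₀ : ℤ) * d) + z [ZMOD (n : ℤ)]) ↔
      (β ≡ -η * k * ((((d : ℕ) : ZMod n)⁻¹).val : ℤ) [ZMOD (n : ℤ)]) := by
  haveI : NeZero n := ⟨hn.ne'⟩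
  rw [← ZMod.intCast_eq_intCast_iff, ← ZMod.intCast_eq_intCast_iff]
  have hz0 : ((z : ℤ) : ZMod n) = 0 := by rwa [ZMod.intCast_zmod_eq_zero_iff_dvd]
  have hdu : (d : ZMod n) * (d : ZMod n)⁻¹ = 1 := ZMod.coe_mul_inv_eq_one d hd
  have h0u : IsUnit ((q₀ : ℕ) : ZMod n) := (ZMod.isUnit_iff_coprime q₀ n).mpr h₀
  have hval : ((((d : ℕ) : ZMod n)⁻¹.val : ℕ) : ZMod n) = ((d : ZMod n))⁻¹ := by
    simp [ZMod.natCast_val, ZMod.cast_id]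
  constructor
  · intro h
    push_cast at h ⊢
    rw [hval]
    have h2 : ((q₀ : ℕ) : ZMod n) * (-(η * k)) = ((q₀ : ℕ) : ZMod n) * (β * (d : ZMod n)) := by
      push_cast at hz0
      linear_combination h + hz0
    have h3 : -(η * k) = β * (d : ZMod n) := h0u.mul_left_cancel h2
    calc (β : ZMod n) = β * ((d : ZMod n) * (d : ZMod n)⁻¹) := by rw [hdu]; ring
      _ = -η * k * (d : ZMod n)⁻¹ := by rw [← mul_assoc, ← h3]; ring
  · intro h
    push_cast at h ⊢
    rw [hval] at h
    have h3 : (β : ZMod n) * (d : ZMod n) = -(η * k) := by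
      calc (β : ZMod n) * d = -η * k * ((d : ZMod n)⁻¹ * d) := by rw [h]; ring
        _ = -(η * k) := by rw [mul_comm ((d : ZMod n))⁻¹, hdu]; ring
    push_cast at hz0
    linear_combination (-((q₀ : ℕ) : ZMod n)) * h3 - hz0

/-- Chinese-remainder decomposition of the congruence
`−ηm ≡ α₁q₂ + α₂q₁ (mod q₁q₂)` arising in the character sum analysis. -/
theorem congruence_crt_decomposition (q₁ q₂ q₀ q₁₀ q₂₀ q₁' q₂' : ℕ)
    (hq₁ : 0 < q₁) (hq₂ : 0 < q₂)
    (hq₀ : q₀ = Nat.gcd q₁ q₂)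
    (hf₁ : q₁ = q₀ * q₁₀ * q₁') (hf₂ : q₂ = q₀ * q₂₀ * q₂')
    (hp₁ : ∀ p : ℕ, p.Prime → p ∣ q₁₀ → p ∣ q₀)
    (hp₂ : ∀ p : ℕ, p.Prime → p ∣ q₂₀ → p ∣ q₀)
    (hc₁ : Nat.Coprime q₁' q₀) (hc₂ : Nat.Coprime q₂' q₀)
    (η : ℤ) (hη : η = 1 ∨ η = -1) (m α₁ α₂ : ℤ)
    (hα₁ : Int.gcd α₁ q₁ = 1) (hα₂ : Int.gcd α₂ q₂ = 1) :
    (-η * m ≡ α₁ * q₂ + α₂ * q₁ [ZMOD ((q₁ : ℤ) * q₂)]) ↔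
      ((q₀ : ℤ) ∣ m ∧
        (-η * (m / q₀) ≡ α₁ * ((q₂₀ : ℤ) * q₂') + α₂ * ((q₁₀ : ℤ) * q₁')
          [ZMOD ((q₀ : ℤ) * q₁₀ * q₂₀)]) ∧
        (α₁ ≡ -η * (m / q₀) * ((((q₂₀ * q₂' : ℕ) : ZMod q₁')⁻¹).val : ℤ) [ZMOD (q₁' : ℤ)]) ∧
        (α₂ ≡ -η * (m / q₀) * ((((q₁₀ * q₁' : ℕ) : ZMod q₂')⁻¹).val : ℤ) [ZMOD (q₂' : ℤ)])) := by
  -- positivity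
  have h1'pos : 0 < q₁' := Nat.pos_of_ne_zero fun h => by simp [hf₁, h] at hq₁
  have h2'pos : 0 < q₂' := Nat.pos_of_ne_zero fun h => by simp [hf₂, h] at hq₂
  have h0pos : 0 < q₀ := Nat.pos_of_ne_zero fun h => by simp [hf₁, h] at hq₁
  have h0z : (q₀ : ℤ) ≠ 0 := by exact_mod_cast h0pos.ne'
  -- coprimality facts
  have c10_1' : Nat.Coprime q₁₀ q₁' := nat_coprime_of _ _ fun p pp h1 h2 =>
    pp.ne_one (Nat.dvd_one.mp (hc₁ ▸ Nat.dvd_gcd h2 (hp₁ p pp h1)))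
  have c20_1' : Nat.Coprime q₂₀ q₁' := nat_coprime_of _ _ fun p pp h1 h2 =>
    pp.ne_one (Nat.dvd_one.mp (hc₁ ▸ Nat.dvd_gcd h2 (hp₂ p pp h1)))
  have c10_2' : Nat.Coprime q₁₀ q₂' := nat_coprime_of _ _ fun p pp h1 h2 =>
    pp.ne_one (Nat.dvd_one.mp (hc₂ ▸ Nat.dvd_gcd h2 (hp₁ p pp h1)))
  have c20_2' : Nat.Coprime q₂₀ q₂' := nat_coprime_of _ _ fun p pp h1 h2 =>
    pp.ne_one (Nat.dvd_one.mp (hc₂ ▸ Nat.dvd_gcd h2 (hp₂ p pp h1)))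
  have c1'2' : Nat.Coprime q₁' q₂' := nat_coprime_of _ _ fun p pp h1 h2 => by
    have hd1 : p ∣ q₁ := by rw [hf₁]; exact h1.mul_left _
    have hd2 : p ∣ q₂ := by rw [hf₂]; exact h2.mul_left _
    exact pp.ne_one (Nat.dvd_one.mp (hc₁ ▸ Nat.dvd_gcd h1 (hq₀ ▸ Nat.dvd_gcd hd1 hd2)))
  have copA1' : Nat.Coprime (q₀ * q₀ * q₁₀ * q₂₀) q₁' :=
    ((hc₁.symm.mul hc₁.symm).mul c10_1').mul c20_1'
  have copA2' : Nat.Coprime (q₀ * q₀ * q₁₀ * q₂₀) q₂' :=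
    ((hc₂.symm.mul hc₂.symm).mul c10_2').mul c20_2'
  -- split the modulus
  have hmod : (q₁ : ℤ) * q₂ =
      ((q₀ * q₀ * q₁₀ * q₂₀ : ℕ) : ℤ) * ((q₁' : ℕ) : ℤ) * ((q₂' : ℕ) : ℤ) := by
    rw [hf₁, hf₂]; push_cast; ring
  rw [hmod,
    ← Int.modEq_and_modEq_iff_modEq_mul (by
      simp only [Int.natAbs_mul, Int.natAbs_natCast]
      exact copA2'.mul c1'2'),
    ← Int.modEq_and_modEq_iff_modEq_mul (by
      simp only [Int.natAbs_natCast]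
      exact copA1')]
  -- part A
  have hA : (-η * m ≡ α₁ * q₂ + α₂ * q₁ [ZMOD ((q₀ * q₀ * q₁₀ * q₂₀ : ℕ) : ℤ)]) ↔
      ((q₀ : ℤ) ∣ m ∧
        (-η * (m / q₀) ≡ α₁ * ((q₂₀ : ℤ) * q₂') + α₂ * ((q₁₀ : ℤ) * q₁')
          [ZMOD ((q₀ : ℤ) * q₁₀ * q₂₀)])) := by
    have hAe : ((q₀ * q₀ * q₁₀ * q₂₀ : ℕ) : ℤ) = (q₀ : ℤ) * ((q₀ : ℤ) * q₁₀ * q₂₀) := by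
      push_cast; ring
    constructor
    · intro h
      rw [Int.modEq_iff_dvd] at h
      have hq0m : (q₀ : ℤ) ∣ m := by
        have hq01 : (q₀ : ℤ) ∣ (q₁ : ℤ) := by rw [hf₁]; push_cast; exact ⟨q₁₀ * q₁', by ring⟩
        have hq02 : (q₀ : ℤ) ∣ (q₂ : ℤ) := by rw [hf₂]; push_cast; exact ⟨q₂₀ * q₂', by ring⟩
        have hA0 : (q₀ : ℤ) ∣ ((q₀ * q₀ * q₁₀ * q₂₀ : ℕ) : ℤ) := by
          push_cast; exact ⟨(q₀ : ℤ) * q₁₀ * q₂₀, by ring⟩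
        have h2 := hA0.trans h
        have h3 : (q₀ : ℤ) ∣
            (α₁ * q₂ + α₂ * q₁ - -η * m - α₁ * (q₂ : ℤ) - α₂ * (q₁ : ℤ)) :=
          (h2.sub (hq02.mul_left α₁)).sub (hq01.mul_left α₂)
        have h4 : (α₁ * (q₂:ℤ) + α₂ * q₁ - -η * m - α₁ * (q₂ : ℤ) - α₂ * (q₁ : ℤ)) = η * m := by
          ring
        rw [h4] at h3
        rcases hη with rfl | rfl
        · simpa using h3
        · simpa using h3
      obtain ⟨k, hk⟩ := hq0m
      have hdiv : m / (q₀ : ℤ) = k := by rw [hk]; exact Int.mul_ediv_cancel_left _ h0z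
      refine ⟨⟨k, hk⟩, ?_⟩
      rw [Int.modEq_iff_dvd, hdiv]
      have key : (α₁ * (q₂:ℤ) + α₂ * q₁) - (-η * m) =
          (q₀ : ℤ) * ((α₁ * ((q₂₀ : ℤ) * q₂') + α₂ * ((q₁₀ : ℤ) * q₁')) - (-η * k)) := by
        rw [hf₁, hf₂, hk]; push_cast; ring
      rw [key, hAe] at h
      exact (mul_dvd_mul_iff_left h0z).mp h
    · rintro ⟨hq0m, hQ⟩
      obtain ⟨k, hk⟩ := hq0m
      have hdiv : m / (q₀ : ℤ) = k := by rw [hk]; exact Int.mul_ediv_cancel_left _ h0z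
      rw [Int.modEq_iff_dvd, hdiv] at hQ
      rw [Int.modEq_iff_dvd]
      have key : (α₁ * (q₂:ℤ) + α₂ * q₁) - (-η * m) =
          (q₀ : ℤ) * ((α₁ * ((q₂₀ : ℤ) * q₂') + α₂ * ((q₁₀ : ℤ) * q₁')) - (-η * k)) := by
        rw [hf₁, hf₂, hk]; push_cast; ring
      rw [key, hAe]
      exact mul_dvd_mul_left _ hQ
  -- part B
  have hB : (q₀ : ℤ) ∣ m →
      ((-η * m ≡ α₁ * q₂ + α₂ * q₁ [ZMOD ((q₁' : ℕ) : ℤ)]) ↔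
        (α₁ ≡ -η * (m / q₀) * ((((q₂₀ * q₂' : ℕ) : ZMod q₁')⁻¹).val : ℤ) [ZMOD (q₁' : ℤ)])) := by
    rintro ⟨k, hk⟩
    have hdiv : m / (q₀ : ℤ) = k := by rw [hk]; exact Int.mul_ediv_cancel_left _ h0z
    rw [hdiv, hk]
    rw [show α₁ * (q₂ : ℤ) + α₂ * (q₁ : ℤ) =
        α₁ * ((q₀ : ℤ) * ((q₂₀ * q₂' : ℕ) : ℤ)) + α₂ * q₁ from by rw [hf₂]; push_cast; ring]
    exact side_iff q₁' h1'pos q₀ (q₂₀ * q₂') hc₁.symm (c20_1'.mul c1'2'.symm) η k α₁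
      (α₂ * q₁) (by rw [hf₁]; push_cast; exact ⟨α₂ * ((q₀ : ℤ) * q₁₀), by ring⟩)
  -- part C
  have hC : (q₀ : ℤ) ∣ m →
      ((-η * m ≡ α₁ * q₂ + α₂ * q₁ [ZMOD ((q₂' : ℕ) : ℤ)]) ↔
        (α₂ ≡ -η * (m / q₀) * ((((q₁₀ * q₁' : ℕ) : ZMod q₂')⁻¹).val : ℤ) [ZMOD (q₂' : ℤ)])) := by
    rintro ⟨k, hk⟩
    have hdiv : m / (q₀ : ℤ) = k := by rw [hk]; exact Int.mul_ediv_cancel_left _ h0z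
    rw [hdiv, hk]
    rw [show α₁ * (q₂ : ℤ) + α₂ * (q₁ : ℤ) =
        α₂ * ((q₀ : ℤ) * ((q₁₀ * q₁' : ℕ) : ℤ)) + α₁ * q₂ from by rw [hf₁]; push_cast; ring]
    exact side_iff q₂' h2'pos q₀ (q₁₀ * q₁') hc₂.symm (c10_2'.mul c1'2') η k α₂
      (α₁ * q₂) (by rw [hf₂]; push_cast; exact ⟨α₁ * ((q₀ : ℤ) * q₂₀), by ring⟩)
  constructor
  · rintro ⟨⟨hPA, hPB⟩, hPC⟩
    obtain ⟨hD, hQA⟩ := hA.mp hPA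
    exact ⟨hD, hQA, (hB hD).mp hPB, (hC hD).mp hPC⟩
  · rintro ⟨hD, hQA, hQB, hQC⟩
    exact ⟨⟨hA.mpr ⟨hD, hQA⟩, (hB hD).mpr hQB⟩, (hC hD).mpr hQC⟩
end
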